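/- Let S be a nonempty set, (G, ·, d) a complete metric group whose metric d is invariant under left translations, φ : S → S, g : S → G, and let ε : S → ℝ≥0 be such that for every x ∈ S the series Σ_{n=0}^∞ ε(φⁿ(x)) converges. Suppose f : S → G satisfies d(f(φ(x)), g(x)·f(x)) ≤ ε(x) for all x ∈ S, define ε_n(x) = (g(φⁿ⁻¹(x))·g(φⁿ⁻²(x))·…·g(x))⁻¹ · f(φⁿ(x)) for n ≥ 1, and suppose f₀ : S → G satisfies f₀(x) = lim_{n→∞} ε_n(x) for every x ∈ S. Then f₀ satisfies f₀(φ(x)) = g(x)·f₀(x) for all x ∈ S. -/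
import Mathlib


/-- The product `g(φ^{n-1}(x)) · g(φ^{n-2}(x)) · … · g(φ(x)) · g(x)`,
with factors of higher index multiplied on the left. -/
def leftProd {S G : Type*} [Group G] (φ : S → S) (g : S → G) (x : S) : ℕ → G
  | 0 => 1
  | n + 1 => g (φ^[n] x) * leftProd φ g x n

theorem limit_is_solution
    {S G : Type*} [Nonempty S] [Group G] [MetricSpace G] [CompleteSpace G]
    (hinv : ∀ x y z : G, dist (x * y) (x * z) = dist y z)
    (φ : S → S) (g : S → G) (ε : S → NNReal)
    (hε : ∀ x : S, Summable (fun n : ℕ => ε (φ^[n] x)))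
    (f : S → G) (hf : ∀ x : S, dist (f (φ x)) (g x * f x) ≤ ε x)
    (f₀ : S → G)
    (hf₀ : ∀ x : S, Filter.Tendsto
      (fun n : ℕ => (leftProd φ g x (n + 1))⁻¹ * f (φ^[n + 1] x))
      Filter.atTop (nhds (f₀ x))) :
    ∀ x : S, f₀ (φ x) = g x * f₀ x := by
  intro x
  have key : ∀ n, leftProd φ g x (n + 1) = leftProd φ g (φ x) n * g x := by
    intro n
    induction n with
    | zero => simp [leftProd]
    | succ n ih =>
      show g (φ^[n + 1] x) * leftProd φ g x (n + 1)
          = g (φ^[n] (φ x)) * leftProd φ g (φ x) n * g x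
      rw [ih, Function.iterate_succ_apply, mul_assoc]
  have isom : Isometry (fun y : G => (g x)⁻¹ * y) := by
    intro y z
    simp [edist_dist, hinv]
  have h1 : Filter.Tendsto
      (fun n : ℕ => (g x)⁻¹ * ((leftProd φ g (φ x) (n + 1))⁻¹ * f (φ^[n + 1] (φ x))))
      Filter.atTop (nhds ((g x)⁻¹ * f₀ (φ x))) :=
    (isom.continuous.tendsto _).comp (hf₀ (φ x))
  have h2 : Filter.Tendsto
      (fun n : ℕ => (leftProd φ g x (n + 2))⁻¹ * f (φ^[n + 2] x))
      Filter.atTop (nhds (f₀ x)) :=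
    (hf₀ x).comp (Filter.tendsto_add_atTop_nat 1)
  have heq : (fun n : ℕ => (leftProd φ g x (n + 2))⁻¹ * f (φ^[n + 2] x))
      = fun n : ℕ => (g x)⁻¹ * ((leftProd φ g (φ x) (n + 1))⁻¹ * f (φ^[n + 1] (φ x))) := by
    funext n
    rw [key (n + 1), mul_inv_rev, mul_assoc, Function.iterate_succ_apply]
  rw [heq] at h2
  have := tendsto_nhds_unique h2 h1
  exact (eq_inv_mul_iff_mul_eq.mp this).symm
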